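/- There exists a degeneration R_5(α_4,...,α_n) → R_5(0,...,0): with g_t(x) = x, g_t(e_1) = t·e_1, g_t(e_i) = t^{i-1}e_i (2 ≤ i ≤ n), the transported brackets converge as t → 0 to the bracket of R_5(0). -/

import Mathlib

/-- Coordinate of `u` at a natural-number index, zero out of range. -/
def cf {m : ℕ} (u : Fin m → ℂ) (j : ℕ) : ℂ := if h : j < m then u ⟨j, h⟩ else 0

/-- The bracket of `R_5(α_4, …, α_n)` (parameters given as `a : ℕ → ℂ`, with `a i = α_i`)
on the basis `e_1, …, e_n, x` (0-based coordinate `k` corresponds to `e_{k+1}` for `k < n`,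
and to `x` for `k = n`):
`[e_1,e_1] = e_3`, `[e_i,e_1] = e_{i+1}` (`2 ≤ i ≤ n-1`),
`[e_1,x] = e_2 + Σ_{i=4}^{n-1} α_i e_i`,
`[e_i,x] = e_i + Σ_{j=i+2}^{n} α_{j-i+2} e_j` (`2 ≤ i ≤ n`), other products zero. -/
noncomputable def r5br (n : ℕ) (a : ℕ → ℂ) (u v : Fin (n + 1) → ℂ) : Fin (n + 1) → ℂ := fun k =>
  let m := (k : ℕ) + 1
  (if 3 ≤ m ∧ m ≤ n then (cf u (m - 2) + if m = 3 then cf u 0 else 0) * cf v 0 else 0)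
  + (if 2 ≤ m ∧ m ≤ n then
      (cf u (m - 1) + (if m = 2 then cf u 0 else 0)
        + (if 4 ≤ m ∧ m ≤ n - 1 then a m * cf u 0 else 0)
        + ∑ i ∈ Finset.Icc 2 (m - 2), a (m - i + 2) * cf u (i - 1)) * cf v n
    else 0)

/-- The diagonal coefficients of `g_t`: `g_t(x) = x`, `g_t(e_1) = t e_1`,
`g_t(e_i) = t^{i-1} e_i` for `2 ≤ i ≤ n` (0-based index `j` corresponds to `e_{j+1}`). -/
def d17 (n : ℕ) (t : ℂ) (j : ℕ) : ℂ :=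
  if j = n then 1 else if j = 0 then t else t ^ j

/-!
`g_t` is diagonal with weights `w(e_1) = 1`, `w(e_i) = i - 1`, `w(x) = 0`, so it multiplies the
structure constant of `[e_i, e_j] = e_k` by `t ^ (w(e_k) - w(e_i) - w(e_j))`. The brackets of
`R_5(0)` are homogeneous of weight `0`, while `α_j` only enters brackets of weight `j - 2`.
Hence `g_t` carries `R_5(α)` to `R_5(t ^ (j - 2) α_j)`, which depends continuously on `t` and
is `R_5(0)` at `t = 0` because only `j ≥ 4` occur.
-/

open Filter Topology

lemma cf_mul_left {m : ℕ} (c : ℕ → ℂ) (u : Fin m → ℂ) (j : ℕ) :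
    cf (fun k => c k * u k) j = c j * cf u j := by
  unfold cf; split <;> simp

section d17

variable {n : ℕ} (t : ℂ)

lemma d17_self : d17 n t n = 1 := if_pos rfl

lemma d17_zero (hn : n ≠ 0) : d17 n t 0 = t := by simp [d17, hn.symm]

lemma d17_of_pos_of_lt {j : ℕ} (hj : 0 < j) (hjn : j < n) : d17 n t j = t ^ j := by
  simp [d17, hjn.ne, hj.ne']

end d17

/-- Coordinate `k` of `[u, e_1]` in `R_5`. -/
noncomputable def r5RightE1 (n : ℕ) (u : Fin (n + 1) → ℂ) (k : ℕ) : ℂ :=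
  if 3 ≤ k + 1 ∧ k + 1 ≤ n then cf u (k - 1) + (if k + 1 = 3 then cf u 0 else 0) else 0

/-- Coordinate `k` of `[u, x]` in `R_5(α)`. -/
noncomputable def r5RightX (n : ℕ) (a : ℕ → ℂ) (u : Fin (n + 1) → ℂ) (k : ℕ) : ℂ :=
  if 2 ≤ k + 1 ∧ k + 1 ≤ n then
    cf u k + (if k + 1 = 2 then cf u 0 else 0)
      + (if 4 ≤ k + 1 ∧ k + 1 ≤ n - 1 then a (k + 1) * cf u 0 else 0)
      + ∑ i ∈ Finset.Icc 2 (k + 1 - 2), a (k + 1 - i + 2) * cf u (i - 1)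
  else 0

lemma r5br_apply (n : ℕ) (a : ℕ → ℂ) (u v : Fin (n + 1) → ℂ) (k : Fin (n + 1)) :
    r5br n a u v k = r5RightE1 n u k * cf v 0 + r5RightX n a u k * cf v n := by
  simp only [r5br, r5RightE1, r5RightX, ite_mul, zero_mul, Nat.add_sub_cancel,
    show (k : ℕ) + 1 - 2 = k - 1 by omega]

section Transport

variable {n : ℕ} {t : ℂ}

lemma d17_mul_r5RightE1 (ht : t ≠ 0) (u : Fin (n + 1) → ℂ) (k : ℕ) :
    d17 n t k * r5RightE1 n (fun k' => (d17 n t k')⁻¹ * u k') k * (d17 n t 0)⁻¹ =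
      r5RightE1 n u k := by
  unfold r5RightE1
  split_ifs with hk hk3
  · obtain rfl : k = 2 := by omega
    simp only [cf_mul_left fun j => (d17 n t j)⁻¹]
    rw [d17_of_pos_of_lt t (by omega) (by omega), d17_of_pos_of_lt t (by omega) (by omega),
      d17_zero t (by omega)]
    field_simp
    ring
  · obtain ⟨p, rfl⟩ : ∃ p, k = p + 2 := ⟨k - 2, by omega⟩
    rw [cf_mul_left fun j => (d17 n t j)⁻¹, show p + 2 - 1 = p + 1 by omega,
      d17_of_pos_of_lt t (by omega) (by omega),
      d17_of_pos_of_lt t (by omega : 0 < p + 1) (by omega), d17_zero t (by omega)]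
    field_simp
    ring
  · simp

lemma d17_mul_r5RightX (ht : t ≠ 0) (a : ℕ → ℂ) (u : Fin (n + 1) → ℂ) (k : ℕ) :
    d17 n t k * r5RightX n a (fun k' => (d17 n t k')⁻¹ * u k') k =
      r5RightX n (fun j => t ^ (j - 2) * a j) u k := by
  unfold r5RightX
  by_cases hk : 2 ≤ k + 1 ∧ k + 1 ≤ n
  swap
  · rw [if_neg hk, if_neg hk, mul_zero]
  simp only [if_pos hk, cf_mul_left fun j => (d17 n t j)⁻¹]
  rw [d17_of_pos_of_lt t (by omega) (by omega), d17_zero t (by omega)]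
  have hpow {j : ℕ} (hj : j ≤ k) : t ^ k * (t ^ j)⁻¹ = t ^ (k - j) :=
    (pow_sub₀ t ht hj).symm
  have hdiag : t ^ k * ((t ^ k)⁻¹ * cf u k) = cf u k := by field_simp
  have he1 : t ^ k * (if k + 1 = 2 then t⁻¹ * cf u 0 else 0) =
      if k + 1 = 2 then cf u 0 else 0 := by
    split_ifs with h
    · obtain rfl : k = 1 := by omega
      field_simp
    · rw [mul_zero]
  have hα :
      t ^ k * (if 4 ≤ k + 1 ∧ k + 1 ≤ n - 1 then a (k + 1) * (t⁻¹ * cf u 0) else 0) =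
      if 4 ≤ k + 1 ∧ k + 1 ≤ n - 1 then t ^ (k + 1 - 2) * a (k + 1) * cf u 0 else 0 := by
    split_ifs
    · rw [show k + 1 - 2 = k - 1 by omega, ← hpow (by omega), pow_one]
      ring
    · rw [mul_zero]
  have hsum : t ^ k * ∑ i ∈ Finset.Icc 2 (k + 1 - 2),
        a (k + 1 - i + 2) * ((d17 n t (i - 1))⁻¹ * cf u (i - 1)) =
      ∑ i ∈ Finset.Icc 2 (k + 1 - 2),
        t ^ (k + 1 - i + 2 - 2) * a (k + 1 - i + 2) * cf u (i - 1) := by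
    rw [Finset.mul_sum]
    refine Finset.sum_congr rfl fun i hi => ?_
    rw [Finset.mem_Icc] at hi
    rw [d17_of_pos_of_lt t (by omega) (by omega), show k + 1 - i + 2 - 2 = k - (i - 1) by omega,
      ← hpow (by omega)]
    ring
  rw [mul_add, mul_add, mul_add, hdiag, he1, hα, hsum]

lemma d17_mul_r5br (ht : t ≠ 0) (a : ℕ → ℂ) (u v : Fin (n + 1) → ℂ) (k : Fin (n + 1)) :
    d17 n t k *
        r5br n a (fun k' => (d17 n t k')⁻¹ * u k') (fun k' => (d17 n t k')⁻¹ * v k') k =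
      r5br n (fun j => t ^ (j - 2) * a j) u v k := by
  rw [r5br_apply, r5br_apply, cf_mul_left fun j => (d17 n t j)⁻¹,
    cf_mul_left fun j => (d17 n t j)⁻¹, d17_self, inv_one, one_mul]
  linear_combination cf v 0 * d17_mul_r5RightE1 ht u k + cf v n * d17_mul_r5RightX ht a u k

end Transport

lemma r5br_congr_param {n : ℕ} {a b : ℕ → ℂ} (h : ∀ j, 4 ≤ j → a j = b j)
    (u v : Fin (n + 1) → ℂ) :
    r5br n a u v = r5br n b u v := by
  ext k
  have hα : (if 4 ≤ (k : ℕ) + 1 ∧ (k : ℕ) + 1 ≤ n - 1 then a (k + 1) * cf u 0 else 0) =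
      if 4 ≤ (k : ℕ) + 1 ∧ (k : ℕ) + 1 ≤ n - 1 then b (k + 1) * cf u 0 else 0 := by
    split_ifs with hk
    · rw [h _ hk.1]
    · rfl
  have hsum : ∑ i ∈ Finset.Icc 2 ((k : ℕ) + 1 - 2), a ((k : ℕ) + 1 - i + 2) * cf u (i - 1) =
      ∑ i ∈ Finset.Icc 2 ((k : ℕ) + 1 - 2), b ((k : ℕ) + 1 - i + 2) * cf u (i - 1) :=
    Finset.sum_congr rfl fun i hi => by rw [h _ (by grind)]
  simp only [r5br, hα, hsum]

lemma continuous_r5br_param (n : ℕ) (u v : Fin (n + 1) → ℂ) :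
    Continuous fun a : ℕ → ℂ => r5br n a u v := by
  refine continuous_pi fun k => ?_
  simp only [r5br]
  split_ifs <;> fun_prop

theorem r5_degenerates_to_r5_zero (n : ℕ) (a : ℕ → ℂ) (u v : Fin (n + 1) → ℂ) :
    Filter.Tendsto
      (fun t : ℂ => fun k : Fin (n + 1) =>
        d17 n t (k : ℕ) *
          r5br n a (fun k' => (d17 n t (k' : ℕ))⁻¹ * u k')
            (fun k' => (d17 n t (k' : ℕ))⁻¹ * v k') k)
      (nhdsWithin 0 {t : ℂ | t ≠ 0}) (nhds (r5br n (fun _ => 0) u v)) := by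
  have hcont : Continuous fun t : ℂ => r5br n (fun j => t ^ (j - 2) * a j) u v :=
    (continuous_r5br_param n u v).comp (f := fun t : ℂ => fun j => t ^ (j - 2) * a j)
      (by fun_prop)
  have hzero : r5br n (fun j => (0 : ℂ) ^ (j - 2) * a j) u v = r5br n (fun _ => 0) u v :=
    r5br_congr_param (fun j hj => by rw [zero_pow (by omega), zero_mul]) u v
  have hlim := (hcont.tendsto 0).mono_left (nhdsWithin_le_nhds (s := {t : ℂ | t ≠ 0}))
  rw [hzero] at hlim
  refine hlim.congr' (eventually_nhdsWithin_of_forall fun t ht => ?_)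
  funext k
  exact (d17_mul_r5br ht a u v k).symm
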